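/- For every pair of positive integers (m, n), there exists a smooth function f : ℝ² → ℝ that is 2π-periodic in each variable such that, setting ψ(x,y) = -cos(mx)cos(ny) and φ = {ψ, f}, the Misiołek index satisfies MI(φ) = ∫₀^{2π}∫₀^{2π} ((∂ₓφ)² + (∂_yφ)² − (m²+n²)φ²) dx dy < 0. -/

import Mathlib

set_option maxHeartbeats 1000000

open Real MeasureTheory

/-- Partial derivative in the first variable of a curried function `ℝ → ℝ → ℝ`. -/
noncomputable def pdx (φ : ℝ → ℝ → ℝ) (x y : ℝ) : ℝ := deriv (fun t => φ t y) x

/-- Partial derivative in the second variable of a curried function `ℝ → ℝ → ℝ`. -/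
noncomputable def pdy (φ : ℝ → ℝ → ℝ) (x y : ℝ) : ℝ := deriv (fun t => φ x t) y

/-- Poisson bracket `{ψ, f} = ∂ₓψ ∂_y f − ∂_y ψ ∂ₓ f`. -/
noncomputable def pb (ψ f : ℝ → ℝ → ℝ) : ℝ → ℝ → ℝ :=
  fun x y => pdx ψ x y * pdy f x y - pdy ψ x y * pdx f x y

/-- Misiołek index with coefficient `lam2` (usually `m² + n²`):
`∫₀^{2π}∫₀^{2π} ((∂ₓφ)² + (∂_yφ)² − lam2·φ²) dx dy`. -/
noncomputable def MI (lam2 : ℝ) (φ : ℝ → ℝ → ℝ) : ℝ :=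
  ∫ y in (0:ℝ)..(2 * π), ∫ x in (0:ℝ)..(2 * π),
    ((pdx φ x y) ^ 2 + (pdy φ x y) ^ 2 - lam2 * (φ x y) ^ 2)

section Helpers

lemma hd_sin (k x : ℝ) : HasDerivAt (fun t => Real.sin (k*t)) (k * Real.cos (k*x)) x := by
  exact ((Real.hasDerivAt_sin (k*x)).comp x ((hasDerivAt_id x).const_mul k)).congr_deriv (by ring)

lemma hd_cos (k x : ℝ) : HasDerivAt (fun t => Real.cos (k*t)) (-(k * Real.sin (k*x))) x := by
  exact ((Real.hasDerivAt_cos (k*x)).comp x ((hasDerivAt_id x).const_mul k)).congr_deriv (by ring)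

lemma ii {f : ℝ → ℝ} (hf : Continuous f) : IntervalIntegrable f volume 0 (2*π) :=
  hf.intervalIntegrable _ _

lemma sin2pi (j : ℕ) : Real.sin ((j:ℝ)*(2*π)) = 0 := by
  rw [show (j:ℝ)*(2*π) = (2*j : ℕ)*π by push_cast; ring]
  exact Real.sin_nat_mul_pi (2*j)

lemma L1 (j : ℕ) (hj : j ≠ 0) : ∫ x in (0:ℝ)..(2*π), Real.cos (j*x) = 0 := by
  have hj' : (j:ℝ) ≠ 0 := Nat.cast_ne_zero.mpr hj
  have key : ∀ x ∈ Set.uIcc (0:ℝ) (2*π), HasDerivAt (fun t => Real.sin (j*t)/j) (Real.cos (j*x)) x := by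
    intro x _
    have := (hd_sin j x).div_const j
    refine this.congr_deriv ?_; symm
    field_simp
  rw [intervalIntegral.integral_eq_sub_of_hasDerivAt key (ii (by continuity))]
  simp [sin2pi j]

lemma L2 (j : ℕ) (hj : j ≠ 0) : ∫ x in (0:ℝ)..(2*π), Real.cos (j*x)^2 = π := by
  have hj' : (j:ℝ) ≠ 0 := Nat.cast_ne_zero.mpr hj
  have key : ∀ x ∈ Set.uIcc (0:ℝ) (2*π),
      HasDerivAt (fun t => t/2 + Real.sin (2*j*t)/(4*j)) (Real.cos (j*x)^2) x := by
    intro x _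
    have h := ((hasDerivAt_id x).div_const 2).add ((hd_sin (2*j) x).div_const (4*j))
    refine h.congr_deriv ?_; symm
    rw [Real.cos_sq (j*x), show (2:ℝ)*((j:ℝ)*x) = 2*(j:ℝ)*x by ring]
    field_simp; ring
  rw [intervalIntegral.integral_eq_sub_of_hasDerivAt key (ii (by continuity))]
  rw [show (2:ℝ)*(j:ℝ)*(2*π) = (2*j:ℕ)*(2*π) by push_cast; ring]
  rw [show Real.sin ((2*j:ℕ)*(2*π)) = 0 from sin2pi (2*j)]
  simp

lemma L3 (j : ℕ) (hj : j ≠ 0) : ∫ x in (0:ℝ)..(2*π), Real.cos (j*x)^3 = 0 := by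
  have hj' : (j:ℝ) ≠ 0 := Nat.cast_ne_zero.mpr hj
  have key : ∀ x ∈ Set.uIcc (0:ℝ) (2*π),
      HasDerivAt (fun t => (Real.sin (j*t) - Real.sin (j*t)^3/3)/j) (Real.cos (j*x)^3) x := by
    intro x _
    have h := ((hd_sin j x).sub (((hd_sin j x).pow 3).div_const 3)).div_const j
    refine h.congr_deriv ?_; symm
    have hp := Real.sin_sq_add_cos_sq ((j:ℝ)*x)
    field_simp
    linear_combination (Real.cos ((j:ℝ)*x)*3) * hp
  rw [intervalIntegral.integral_eq_sub_of_hasDerivAt key (ii (by continuity))]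
  simp [sin2pi j]

lemma L4 (j : ℕ) (hj : j ≠ 0) : ∫ x in (0:ℝ)..(2*π), Real.cos (j*x)^4 = 3*π/4 := by
  have hj' : (j:ℝ) ≠ 0 := Nat.cast_ne_zero.mpr hj
  have key : ∀ x ∈ Set.uIcc (0:ℝ) (2*π),
      HasDerivAt (fun t => 3*t/8 + Real.sin (2*j*t)/(4*j) + Real.sin (4*j*t)/(32*j))
        (Real.cos (j*x)^4) x := by
    intro x _
    have h := ((((hasDerivAt_id x).const_mul 3).div_const 8).add
      ((hd_sin (2*j) x).div_const (4*j))).add ((hd_sin (4*j) x).div_const (32*j))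
    refine h.congr_deriv ?_; symm
    have h2 : Real.cos (2*(j:ℝ)*x) = 2*Real.cos ((j:ℝ)*x)^2 - 1 := by
      rw [show (2:ℝ)*(j:ℝ)*x = 2*((j:ℝ)*x) by ring]; exact Real.cos_two_mul _
    have h4 : Real.cos (4*(j:ℝ)*x) = 2*Real.cos (2*(j:ℝ)*x)^2 - 1 := by
      rw [show (4:ℝ)*(j:ℝ)*x = 2*(2*(j:ℝ)*x) by ring]; exact Real.cos_two_mul _
    field_simp
    rw [show (j:ℝ)*x*2 = 2*(j:ℝ)*x by ring, show (j:ℝ)*x*4 = 4*(j:ℝ)*x by ring]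
    linear_combination (-256*(Real.cos (2*(j:ℝ)*x) + 1 + 2*Real.cos ((j:ℝ)*x)^2))*h2 + (-128)*h4
  rw [intervalIntegral.integral_eq_sub_of_hasDerivAt key (ii (by continuity))]
  rw [show (2:ℝ)*(j:ℝ)*(2*π) = (2*j:ℕ)*(2*π) by push_cast; ring,
      show (4:ℝ)*(j:ℝ)*(2*π) = (4*j:ℕ)*(2*π) by push_cast; ring,
      show Real.sin ((2*j:ℕ)*(2*π)) = 0 from sin2pi (2*j),
      show Real.sin ((4*j:ℕ)*(2*π)) = 0 from sin2pi (4*j)]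
  simp; ring

lemma poly_cos_integral (k : ℝ) (j : ℕ) (hj : j ≠ 0) (hk : k = (j:ℝ)) (a0 a1 a2 a3 a4 : ℝ) :
    ∫ x in (0:ℝ)..(2*π), (a0 + a1*Real.cos (k*x) + a2*Real.cos (k*x)^2
      + a3*Real.cos (k*x)^3 + a4*Real.cos (k*x)^4) = 2*π*a0 + π*a2 + 3*π/4*a4 := by
  subst hk
  have i0 : IntervalIntegrable (fun _ : ℝ => a0) volume 0 (2*π) := ii (by continuity)
  have i1 : IntervalIntegrable (fun x : ℝ => a1*Real.cos (j*x)) volume 0 (2*π) := ii (by continuity)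
  have i2 : IntervalIntegrable (fun x : ℝ => a2*Real.cos (j*x)^2) volume 0 (2*π) := ii (by continuity)
  have i3 : IntervalIntegrable (fun x : ℝ => a3*Real.cos (j*x)^3) volume 0 (2*π) := ii (by continuity)
  have i4 : IntervalIntegrable (fun x : ℝ => a4*Real.cos (j*x)^4) volume 0 (2*π) := ii (by continuity)
  rw [intervalIntegral.integral_add (((i0.add i1).add i2).add i3) i4,
      intervalIntegral.integral_add ((i0.add i1).add i2) i3,
      intervalIntegral.integral_add (i0.add i1) i2,
      intervalIntegral.integral_add i0 i1,
      intervalIntegral.integral_const_mul, intervalIntegral.integral_const_mul,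
      intervalIntegral.integral_const_mul, intervalIntegral.integral_const_mul,
      L1 j hj, L2 j hj, L3 j hj, L4 j hj, intervalIntegral.integral_const]
  simp only [smul_eq_mul, sub_zero]
  ring

lemma algA1 (mr nr s c S C c3x S2 C2 Y3 w : ℝ) (h1 : s^2+c^2 = 1) (h2 : S^2+C^2 = 1)
    (hc3 : c3x = 4*c^3 - 3*c) (hS2 : S2 = 2*S*C) (hC2 : C2 = 1 - 2*S^2)
    (hY3 : Y3 = 3*S - 4*S^3) (hw : w = 1 - 2*s^2) :
    mr*s*C * (-(8*nr*(s*S2))) - nr*c*S * (40*mr*c - 6*mr*c3x + 4*mr*(c*C2))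
      = -(mr*nr) * (S*(24 + 14*w - 6*w^2) + Y3*(3 - w)) := by
  subst hc3 hS2 hC2 hY3 hw
  linear_combination ((-38)*S*mr*nr + 8*S^3*mr*nr + 24*c^2*S*mr*nr + (-24)*s^2*S*mr*nr)*h1 + ((-16)*s^2*S*mr*nr)*h2

lemma algA2 (mr nr Y1 Y3 C1 C3 w z L : ℝ) (h : z^2+w^2 = 1) (hL : L = mr^2+nr^2) :
    (-(mr*nr) * (Y1 * (-(28*mr*z) + 24*mr*(w*z)) + Y3 * (2*mr*z)))^2
    + (-(mr*nr) * (nr*C1*(24 + 14*w - 6*w^2) + 3*nr*C3*(3 - w)))^2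
    - L*(-(mr*nr) * (Y1 * (24 + 14*w - 6*w^2) + Y3 * (3 - w)))^2
      = (81*C3^2*mr^2*nr^4 + 432*C1*C3*mr^2*nr^4 + 576*C1^2*mr^2*nr^4 + (-9)*Y3^2*mr^2*nr^4 + (-5)*Y3^2*mr^4*nr^2 + (-144)*Y1*Y3*mr^2*nr^4 + (-256)*Y1*Y3*mr^4*nr^2 + (-576)*Y1^2*mr^2*nr^4 + 208*Y1^2*mr^4*nr^2) + ((-54)*C3^2*mr^2*nr^4 + 108*C1*C3*mr^2*nr^4 + 672*C1^2*mr^2*nr^4 + 6*Y3^2*mr^2*nr^4 + 6*Y3^2*mr^4*nr^2 + (-36)*Y1*Y3*mr^2*nr^4 + 60*Y1*Y3*mr^4*nr^2 + (-672)*Y1^2*mr^2*nr^4 + (-2016)*Y1^2*mr^4*nr^2)*w + (9*C3^2*mr^2*nr^4 + (-192)*C1*C3*mr^2*nr^4 + (-92)*C1^2*mr^2*nr^4 + (-1)*Y3^2*mr^2*nr^4 + (-5)*Y3^2*mr^4*nr^2 + 64*Y1*Y3*mr^2*nr^4 + 176*Y1*Y3*mr^4*nr^2 + 92*Y1^2*mr^2*nr^4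 + (-116)*Y1^2*mr^4*nr^2)*w^2 + (36*C1*C3*mr^2*nr^4 + (-168)*C1^2*mr^2*nr^4 + (-12)*Y1*Y3*mr^2*nr^4 + (-108)*Y1*Y3*mr^4*nr^2 + 168*Y1^2*mr^2*nr^4 + 1512*Y1^2*mr^4*nr^2)*w^3 + (36*C1^2*mr^2*nr^4 + (-36)*Y1^2*mr^2*nr^4 + (-612)*Y1^2*mr^4*nr^2)*w^4 := by
  subst hL
  linear_combination (4*Y3^2*mr^4*nr^2 + (-112)*Y1*Y3*mr^4*nr^2 + 784*Y1^2*mr^4*nr^2 + 96*w*Y1*Y3*mr^4*nr^2 + (-1344)*w*Y1^2*mr^4*nr^2 + 576*w^2*Y1^2*mr^4*nr^2)*h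

lemma algA3 (mr nr Y3 C3 v S C : ℝ) (h2 : S^2+C^2 = 1)
    (hY3 : Y3 = 3*S - 4*S^3) (hC3 : C3 = 4*C^3 - 3*C) (hv : v = 1 - 2*S^2) :
    2*(81*C3^2*mr^2*nr^4 + 432*C*C3*mr^2*nr^4 + 576*C^2*mr^2*nr^4 + (-9)*Y3^2*mr^2*nr^4 + (-5)*Y3^2*mr^4*nr^2 + (-144)*S*Y3*mr^2*nr^4 + (-256)*S*Y3*mr^4*nr^2 + (-576)*S^2*mr^2*nr^4 + 208*S^2*mr^4*nr^2) + (9*C3^2*mr^2*nr^4 + (-192)*C*C3*mr^2*nr^4 + (-92)*C^2*mr^2*nr^4 + (-1)*Y3^2*mr^2*nr^4 + (-5)*Y3^2*mr^4*nr^2 + 64*S*Y3*mr^2*nr^4 + 176*S*Y3*mr^4*nr^2 + 92*S^2*mr^2*nr^4 + (-116)*S^2*mr^4*nr^2) + 3/4*(36*C^2*mr^2*nr^4 + (-36)*S^2*mr^2*nr^4 + (-612)*S^2*mr^4*nr^2)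
      = ((-372)*mr^2*nr^4 + (-255)*mr^4*nr^2) + (1026*mr^2*nr^4 + (-111)*mr^4*nr^2)*v + (896*mr^2*nr^4 + 336*mr^4*nr^2)*v^2 + (380*mr^2*nr^4 + 30*mr^4*nr^2)*v^3 := by
  subst hY3 hC3 hv
  linear_combination (1930*mr^2*nr^4 + 1320*C^2*mr^2*nr^4 + 2736*C^4*mr^2*nr^4 + (-4056)*S^2*mr^2*nr^4 + (-2736)*S^2*C^2*mr^2*nr^4 + 2736*S^4*mr^2*nr^4)*h2

lemma algB1 (mr nr s c S C c3y z2 w v Y3x : ℝ) (h1 : s^2+c^2 = 1) (h2 : S^2+C^2 = 1)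
    (hc3y : c3y = 4*C^3 - 3*C) (hz2 : z2 = 2*s*c) (hw : w = 1 - 2*s^2)
    (hv : v = 1 - 2*S^2) (hY3x : Y3x = 3*s - 4*s^3) :
    mr*s*C * (40*nr*C - 6*nr*c3y + 4*nr*(w*C)) - nr*c*S * (-(8*mr*(z2*S)))
      = mr*nr * (s*(24 + 14*v - 6*v^2) + Y3x*(3 - v)) := by
  subst hc3y hz2 hw hv hY3x
  linear_combination (16*s*S^2*mr*nr)*h1 + (38*s*mr*nr + (-24)*s*C^2*mr*nr + 24*s*S^2*mr*nr + (-8)*s^3*mr*nr)*h2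

lemma algB2 (mr nr s c C3x Y3x v zp w L : ℝ) (h1 : s^2+c^2 = 1)
    (hc3 : C3x = 4*c^3 - 3*c) (hY3x : Y3x = 3*s - 4*s^3) (hw : w = 1 - 2*s^2)
    (hL : L = mr^2+nr^2) :
    (mr*nr * (mr*c*(24 + 14*v - 6*v^2) + 3*mr*C3x*(3 - v)))^2
    + (mr*nr * (s * (-(28*nr*zp) + 24*nr*(v*zp)) + Y3x * (2*nr*zp)))^2
    - L*(mr*nr * (s * (24 + 14*v - 6*v^2) + Y3x * (3 - v)))^2
      = ((-729/2)*mr^2*nr^4 + (-252)*mr^4*nr^2 + 338*zp^2*mr^2*nr^4 + (-351)*v*mr^2*nr^4 + (-96)*v*mr^4*nr^2 + (-624)*v*zp^2*mr^2*nr^4 + (155/2)*v^2*mr^2*nr^4 + 132*v^2*mr^4*nr^2 + 288*v^2*zp^2*mr^2*nr^4 + 78*v^3*mr^2*nr^4 + (-24)*v^3*mr^4*nr^2 + (-18)*v^4*mr^2*nr^4) + ((405/2)*mr^2*nr^4 + 585*mr^4*nr^2 + (-442)*zp^2*mr^2*nr^4 + 327*v*mr^2*nr^4 + 798*v*mr^4*nr^2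 + 720*v*zp^2*mr^2*nr^4 + (-31/2)*v^2*mr^2*nr^4 + (-171)*v^2*mr^4*nr^2 + (-288)*v^2*zp^2*mr^2*nr^4 + (-90)*v^3*mr^2*nr^4 + (-156)*v^3*mr^4*nr^2 + 18*v^4*mr^2*nr^4 + 36*v^4*mr^4*nr^2)*w + (144*mr^2*nr^4 + 576*mr^4*nr^2 + 112*zp^2*mr^2*nr^4 + 36*v*mr^2*nr^4 + 144*v*mr^4*nr^2 + (-96)*v*zp^2*mr^2*nr^4 + (-64)*v^2*mr^2*nr^4 + (-256)*v^2*mr^4*nr^2 + 12*v^3*mr^2*nr^4 + 48*v^3*mr^4*nr^2)*w^2 + (18*mr^2*nr^4 + 180*mr^4*nr^2 + (-8)*zp^2*mr^2*nr^4 + (-12)*v*mr^2*nr^4 + (-120)*v*mr^4*nr^2 + 2*v^2*mr^2*nr^4 + 20*v^2*mr^4*nr^2)*w^3 := by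
  subst hc3 hY3x hw hL
  linear_combination (1089*mr^4*nr^2 + 726*v*mr^4*nr^2 + (-275)*v^2*mr^4*nr^2 + (-132)*v^3*mr^4*nr^2 + 36*v^4*mr^4*nr^2 + 1080*c^2*mr^4*nr^2 + 864*c^2*v*mr^4*nr^2 + (-840)*c^2*v^2*mr^4*nr^2 + 144*c^2*v^3*mr^4*nr^2 + 1296*c^4*mr^4*nr^2 + (-864)*c^4*v*mr^4*nr^2 + 144*c^4*v^2*mr^4*nr^2 + (-2376)*s^2*mr^4*nr^2 + 696*s^2*v^2*mr^4*nr^2 + (-144)*s^2*v^3*mr^4*nr^2 + (-1296)*s^2*c^2*mr^4*nr^2 + 864*s^2*c^2*v*mr^4*nr^2 + (-144)*s^2*c^2*v^2*mr^4*nr^2 + 1296*s^4*mr^4*nr^2 + (-864)*s^4*v*mr^4*nr^2 + 144*s^4*v^2*mr^4*nr^2)*h1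

lemma algB3 (mr nr v zp : ℝ) (h : zp^2+v^2 = 1) :
    2*((-729/2)*mr^2*nr^4 + (-252)*mr^4*nr^2 + 338*zp^2*mr^2*nr^4 + (-351)*v*mr^2*nr^4 + (-96)*v*mr^4*nr^2 + (-624)*v*zp^2*mr^2*nr^4 + (155/2)*v^2*mr^2*nr^4 + 132*v^2*mr^4*nr^2 + 288*v^2*zp^2*mr^2*nr^4 + 78*v^3*mr^2*nr^4 + (-24)*v^3*mr^4*nr^2 + (-18)*v^4*mr^2*nr^4) + (144*mr^2*nr^4 + 576*mr^4*nr^2 + 112*zp^2*mr^2*nr^4 + 36*v*mr^2*nr^4 + 144*v*mr^4*nr^2 + (-96)*v*zp^2*mr^2*nr^4 + (-64)*v^2*mr^2*nr^4 + (-256)*v^2*mr^4*nr^2 + 12*v^3*mr^2*nr^4 + 48*v^3*mr^4*nr^2)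
      = (203*mr^2*nr^4 + 72*mr^4*nr^2) + ((-2010)*mr^2*nr^4 + (-48)*mr^4*nr^2)*v + ((-121)*mr^2*nr^4 + 8*mr^4*nr^2)*v^2 + (1512*mr^2*nr^4)*v^3 + ((-612)*mr^2*nr^4)*v^4 := by
  linear_combination (788*mr^2*nr^4 + (-1344)*v*mr^2*nr^4 + 576*v^2*mr^2*nr^4)*h

end Helpers

lemma caseA (m n : ℕ) (hm : 0 < m) (hn0 : 0 < n) (hnm : n ≤ m) :
    MI ((m : ℝ) ^ 2 + (n : ℝ) ^ 2)
      (pb (fun x y => -(Real.cos ((m:ℝ) * x) * Real.cos ((n:ℝ) * y))) (fun x y => 40*Real.sin ((m:ℝ)*x) - 2*Real.sin (3*(m:ℝ)*x) + 4*Real.sin ((m:ℝ)*x)*Real.cos (2*(n:ℝ)*y))) < 0 := by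
  have hψx : ∀ x y : ℝ, pdx (fun x y => -(Real.cos ((m:ℝ) * x) * Real.cos ((n:ℝ) * y))) x y = (m:ℝ)*Real.sin ((m:ℝ)*x)*Real.cos ((n:ℝ)*y) := by
    intro x y
    have h := ((hd_cos (m:ℝ) x).mul_const (Real.cos ((n:ℝ)*y))).neg
    exact h.deriv.trans (by ring)
  have hψy : ∀ x y : ℝ, pdy (fun x y => -(Real.cos ((m:ℝ) * x) * Real.cos ((n:ℝ) * y))) x y = (n:ℝ)*Real.cos ((m:ℝ)*x)*Real.sin ((n:ℝ)*y) := by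
    intro x y
    have h := ((hd_cos (n:ℝ) y).const_mul (Real.cos ((m:ℝ)*x))).neg
    exact h.deriv.trans (by ring)
  have hfx : ∀ x y : ℝ, pdx (fun x y => 40*Real.sin ((m:ℝ)*x) - 2*Real.sin (3*(m:ℝ)*x) + 4*Real.sin ((m:ℝ)*x)*Real.cos (2*(n:ℝ)*y)) x y
      = 40*(m:ℝ)*Real.cos ((m:ℝ)*x) - 6*(m:ℝ)*Real.cos (3*(m:ℝ)*x) + 4*(m:ℝ)*(Real.cos ((m:ℝ)*x)*Real.cos (2*(n:ℝ)*y)) := by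
    intro x y
    have h := (((hd_sin (m:ℝ) x).const_mul 40).sub ((hd_sin (3*(m:ℝ)) x).const_mul 2)).add
      (((hd_sin (m:ℝ) x).const_mul 4).mul_const (Real.cos (2*(n:ℝ)*y)))
    exact h.deriv.trans (by ring)
  have hfy : ∀ x y : ℝ, pdy (fun x y => 40*Real.sin ((m:ℝ)*x) - 2*Real.sin (3*(m:ℝ)*x) + 4*Real.sin ((m:ℝ)*x)*Real.cos (2*(n:ℝ)*y)) x y = -(8*(n:ℝ)*(Real.sin ((m:ℝ)*x)*Real.sin (2*(n:ℝ)*y))) := by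
    intro x y
    have h := ((hasDerivAt_const y (40*Real.sin ((m:ℝ)*x))).sub
      (hasDerivAt_const y (2*Real.sin (3*(m:ℝ)*x)))).add
      ((hd_cos (2*(n:ℝ)) y).const_mul (4*Real.sin ((m:ℝ)*x)))
    exact h.deriv.trans (by ring)
  have hpb : ∀ x y : ℝ, pb (fun x y => -(Real.cos ((m:ℝ) * x) * Real.cos ((n:ℝ) * y))) (fun x y => 40*Real.sin ((m:ℝ)*x) - 2*Real.sin (3*(m:ℝ)*x) + 4*Real.sin ((m:ℝ)*x)*Real.cos (2*(n:ℝ)*y)) x y = -((m:ℝ)*(n:ℝ)) * (Real.sin ((n:ℝ)*y) * (24 + 14*Real.cos (2*(m:ℝ)*x) - 6*Real.cos (2*(m:ℝ)*x)^2) + Real.sin (3*(n:ℝ)*y) * (3 - Real.cos (2*(m:ℝ)*x))) := by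
    intro x y
    have hc3 : Real.cos (3*(m:ℝ)*x) = 4*Real.cos ((m:ℝ)*x)^3 - 3*Real.cos ((m:ℝ)*x) := by
      rw [show (3:ℝ)*(m:ℝ)*x = 3*((m:ℝ)*x) by ring]; exact Real.cos_three_mul _
    have hS2 : Real.sin (2*(n:ℝ)*y) = 2*Real.sin ((n:ℝ)*y)*Real.cos ((n:ℝ)*y) := by
      rw [show (2:ℝ)*(n:ℝ)*y = 2*((n:ℝ)*y) by ring]; exact Real.sin_two_mul _
    have hC2 : Real.cos (2*(n:ℝ)*y) = 1 - 2*Real.sin ((n:ℝ)*y)^2 := by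
      rw [show (2:ℝ)*(n:ℝ)*y = 2*((n:ℝ)*y) by ring, Real.cos_two_mul]
      linear_combination 2*(Real.sin_sq_add_cos_sq ((n:ℝ)*y))
    have hY3 : Real.sin (3*(n:ℝ)*y) = 3*Real.sin ((n:ℝ)*y) - 4*Real.sin ((n:ℝ)*y)^3 := by
      rw [show (3:ℝ)*(n:ℝ)*y = 3*((n:ℝ)*y) by ring]; exact Real.sin_three_mul _
    have hw : Real.cos (2*(m:ℝ)*x) = 1 - 2*Real.sin ((m:ℝ)*x)^2 := by
      rw [show (2:ℝ)*(m:ℝ)*x = 2*((m:ℝ)*x) by ring, Real.cos_two_mul]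
      linear_combination 2*(Real.sin_sq_add_cos_sq ((m:ℝ)*x))
    simp only [pb]
    rw [hψx x y, hψy x y, hfx x y, hfy x y]
    exact algA1 (m:ℝ) (n:ℝ) (Real.sin ((m:ℝ)*x)) (Real.cos ((m:ℝ)*x)) (Real.sin ((n:ℝ)*y)) (Real.cos ((n:ℝ)*y)) (Real.cos (3*(m:ℝ)*x)) (Real.sin (2*(n:ℝ)*y)) (Real.cos (2*(n:ℝ)*y)) (Real.sin (3*(n:ℝ)*y)) (Real.cos (2*(m:ℝ)*x))
      (Real.sin_sq_add_cos_sq _) (Real.sin_sq_add_cos_sq _) hc3 hS2 hC2 hY3 hw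
  rw [show (pb (fun x y => -(Real.cos ((m:ℝ) * x) * Real.cos ((n:ℝ) * y))) (fun x y => 40*Real.sin ((m:ℝ)*x) - 2*Real.sin (3*(m:ℝ)*x) + 4*Real.sin ((m:ℝ)*x)*Real.cos (2*(n:ℝ)*y))) = (fun x y => -((m:ℝ)*(n:ℝ)) * (Real.sin ((n:ℝ)*y) * (24 + 14*Real.cos (2*(m:ℝ)*x) - 6*Real.cos (2*(m:ℝ)*x)^2) + Real.sin (3*(n:ℝ)*y) * (3 - Real.cos (2*(m:ℝ)*x)))) from funext fun x => funext fun y => hpb x y]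
  have hφx : ∀ x y : ℝ, pdx (fun x y => -((m:ℝ)*(n:ℝ)) * (Real.sin ((n:ℝ)*y) * (24 + 14*Real.cos (2*(m:ℝ)*x) - 6*Real.cos (2*(m:ℝ)*x)^2) + Real.sin (3*(n:ℝ)*y) * (3 - Real.cos (2*(m:ℝ)*x)))) x y = -((m:ℝ)*(n:ℝ)) * (Real.sin ((n:ℝ)*y) * (-(28*(m:ℝ)*Real.sin (2*(m:ℝ)*x)) + 24*(m:ℝ)*(Real.cos (2*(m:ℝ)*x)*Real.sin (2*(m:ℝ)*x))) + Real.sin (3*(n:ℝ)*y) * (2*(m:ℝ)*Real.sin (2*(m:ℝ)*x))) := by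
    intro x y
    have hw' := hd_cos (2*(m:ℝ)) x
    have h1 := ((hasDerivAt_const x (24:ℝ)).add (hw'.const_mul 14)).sub ((hw'.pow 2).const_mul 6)
    have h2 := ((hasDerivAt_const x (3:ℝ)).sub hw').const_mul (Real.sin (3*(n:ℝ)*y))
    have h := ((h1.const_mul (Real.sin ((n:ℝ)*y))).add h2).const_mul (-((m:ℝ)*(n:ℝ)))
    exact h.deriv.trans (by ring)
  have hφy : ∀ x y : ℝ, pdy (fun x y => -((m:ℝ)*(n:ℝ)) * (Real.sin ((n:ℝ)*y) * (24 + 14*Real.cos (2*(m:ℝ)*x) - 6*Real.cos (2*(m:ℝ)*x)^2) + Real.sin (3*(n:ℝ)*y) * (3 - Real.cos (2*(m:ℝ)*x)))) x y = -((m:ℝ)*(n:ℝ)) * ((n:ℝ)*Real.cos ((n:ℝ)*y)*(24 + 14*Real.cos (2*(m:ℝ)*x) - 6*Real.cos (2*(m:ℝ)*x)^2) + 3*(n:ℝ)*Real.cos (3*(n:ℝ)*y)*(3 - Real.cos (2*(m:ℝ)*x))) := by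
    intro x y
    have h := (((hd_sin (n:ℝ) y).mul_const (24 + 14*Real.cos (2*(m:ℝ)*x) - 6*Real.cos (2*(m:ℝ)*x)^2)).add
      ((hd_sin (3*(n:ℝ)) y).mul_const (3 - Real.cos (2*(m:ℝ)*x)))).const_mul (-((m:ℝ)*(n:ℝ)))
    exact h.deriv.trans (by ring)
  have hInt : ∀ x y : ℝ, (pdx (fun x y => -((m:ℝ)*(n:ℝ)) * (Real.sin ((n:ℝ)*y) * (24 + 14*Real.cos (2*(m:ℝ)*x) - 6*Real.cos (2*(m:ℝ)*x)^2) + Real.sin (3*(n:ℝ)*y) * (3 - Real.cos (2*(m:ℝ)*x)))) x y)^2 + (pdy (fun x y => -((m:ℝ)*(n:ℝ)) * (Real.sin ((n:ℝ)*y) * (24 + 14*Real.cos (2*(m:ℝ)*x) - 6*Real.cos (2*(m:ℝ)*x)^2) + Real.sin (3*(n:ℝ)*y) * (3 - Real.cos (2*(m:ℝ)*x)))) x y)^2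
      - ((m:ℝ)^2 + (n:ℝ)^2) * (-((m:ℝ)*(n:ℝ)) * (Real.sin ((n:ℝ)*y) * (24 + 14*Real.cos (2*(m:ℝ)*x) - 6*Real.cos (2*(m:ℝ)*x)^2) + Real.sin (3*(n:ℝ)*y) * (3 - Real.cos (2*(m:ℝ)*x))))^2
      = (81*(Real.cos (3*(n:ℝ)*y))^2*(m:ℝ)^2*(n:ℝ)^4 + 432*(Real.cos ((n:ℝ)*y))*(Real.cos (3*(n:ℝ)*y))*(m:ℝ)^2*(n:ℝ)^4 + 576*(Real.cos ((n:ℝ)*y))^2*(m:ℝ)^2*(n:ℝ)^4 + (-9)*(Real.sin (3*(n:ℝ)*y))^2*(m:ℝ)^2*(n:ℝ)^4 + (-5)*(Real.sin (3*(n:ℝ)*y))^2*(m:ℝ)^4*(n:ℝ)^2 + (-144)*(Real.sin ((n:ℝ)*y))*(Real.sin (3*(n:ℝ)*y))*(m:ℝ)^2*(n:ℝ)^4 + (-256)*(Real.sin ((n:ℝ)*y))*(Real.sin (3*(n:ℝ)*y))*(m:ℝ)^4*(n:ℝ)^2 + (-576)*(Real.sin ((n:ℝ)*y))^2*(m:ℝ)^2*(n:ℝ)^4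 + 208*(Real.sin ((n:ℝ)*y))^2*(m:ℝ)^4*(n:ℝ)^2) + ((-54)*(Real.cos (3*(n:ℝ)*y))^2*(m:ℝ)^2*(n:ℝ)^4 + 108*(Real.cos ((n:ℝ)*y))*(Real.cos (3*(n:ℝ)*y))*(m:ℝ)^2*(n:ℝ)^4 + 672*(Real.cos ((n:ℝ)*y))^2*(m:ℝ)^2*(n:ℝ)^4 + 6*(Real.sin (3*(n:ℝ)*y))^2*(m:ℝ)^2*(n:ℝ)^4 + 6*(Real.sin (3*(n:ℝ)*y))^2*(m:ℝ)^4*(n:ℝ)^2 + (-36)*(Real.sin ((n:ℝ)*y))*(Real.sin (3*(n:ℝ)*y))*(m:ℝ)^2*(n:ℝ)^4 + 60*(Real.sin ((n:ℝ)*y))*(Real.sin (3*(n:ℝ)*y))*(m:ℝ)^4*(n:ℝ)^2 + (-672)*(Real.sin ((n:ℝ)*y))^2*(m:ℝ)^2*(n:ℝ)^4 + (-2016)*(Real.sin ((n:ℝ)*y))^2*(m:ℝ)^4*(n:ℝ)^2)*Real.cos (2*(m:ℝ)*x) + (9*(Real.cos (3*(n:ℝ)*y))^2*(m:ℝ)^2*(n:ℝ)^4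 + (-192)*(Real.cos ((n:ℝ)*y))*(Real.cos (3*(n:ℝ)*y))*(m:ℝ)^2*(n:ℝ)^4 + (-92)*(Real.cos ((n:ℝ)*y))^2*(m:ℝ)^2*(n:ℝ)^4 + (-1)*(Real.sin (3*(n:ℝ)*y))^2*(m:ℝ)^2*(n:ℝ)^4 + (-5)*(Real.sin (3*(n:ℝ)*y))^2*(m:ℝ)^4*(n:ℝ)^2 + 64*(Real.sin ((n:ℝ)*y))*(Real.sin (3*(n:ℝ)*y))*(m:ℝ)^2*(n:ℝ)^4 + 176*(Real.sin ((n:ℝ)*y))*(Real.sin (3*(n:ℝ)*y))*(m:ℝ)^4*(n:ℝ)^2 + 92*(Real.sin ((n:ℝ)*y))^2*(m:ℝ)^2*(n:ℝ)^4 + (-116)*(Real.sin ((n:ℝ)*y))^2*(m:ℝ)^4*(n:ℝ)^2)*Real.cos (2*(m:ℝ)*x)^2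
        + (36*(Real.cos ((n:ℝ)*y))*(Real.cos (3*(n:ℝ)*y))*(m:ℝ)^2*(n:ℝ)^4 + (-168)*(Real.cos ((n:ℝ)*y))^2*(m:ℝ)^2*(n:ℝ)^4 + (-12)*(Real.sin ((n:ℝ)*y))*(Real.sin (3*(n:ℝ)*y))*(m:ℝ)^2*(n:ℝ)^4 + (-108)*(Real.sin ((n:ℝ)*y))*(Real.sin (3*(n:ℝ)*y))*(m:ℝ)^4*(n:ℝ)^2 + 168*(Real.sin ((n:ℝ)*y))^2*(m:ℝ)^2*(n:ℝ)^4 + 1512*(Real.sin ((n:ℝ)*y))^2*(m:ℝ)^4*(n:ℝ)^2)*Real.cos (2*(m:ℝ)*x)^3 + (36*(Real.cos ((n:ℝ)*y))^2*(m:ℝ)^2*(n:ℝ)^4 + (-36)*(Real.sin ((n:ℝ)*y))^2*(m:ℝ)^2*(n:ℝ)^4 + (-612)*(Real.sin ((n:ℝ)*y))^2*(m:ℝ)^4*(n:ℝ)^2)*Real.cos (2*(m:ℝ)*x)^4 := by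
    intro x y
    rw [hφx x y, hφy x y]
    exact algA2 (m:ℝ) (n:ℝ) (Real.sin ((n:ℝ)*y)) (Real.sin (3*(n:ℝ)*y)) (Real.cos ((n:ℝ)*y)) (Real.cos (3*(n:ℝ)*y)) (Real.cos (2*(m:ℝ)*x)) (Real.sin (2*(m:ℝ)*x)) ((m:ℝ)^2 + (n:ℝ)^2)
      (Real.sin_sq_add_cos_sq _) rfl
  have houter : ∀ y ∈ Set.uIcc (0:ℝ) (2*π),
      (∫ x in (0:ℝ)..(2*π), ((pdx (fun x y => -((m:ℝ)*(n:ℝ)) * (Real.sin ((n:ℝ)*y) * (24 + 14*Real.cos (2*(m:ℝ)*x) - 6*Real.cos (2*(m:ℝ)*x)^2) + Real.sin (3*(n:ℝ)*y) * (3 - Real.cos (2*(m:ℝ)*x)))) x y)^2 + (pdy (fun x y => -((m:ℝ)*(n:ℝ)) * (Real.sin ((n:ℝ)*y) * (24 + 14*Real.cos (2*(m:ℝ)*x) - 6*Real.cos (2*(m:ℝ)*x)^2) + Real.sin (3*(n:ℝ)*y) * (3 - Real.cos (2*(m:ℝ)*x)))) x y)^2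
        - ((m:ℝ)^2 + (n:ℝ)^2) * (-((m:ℝ)*(n:ℝ)) * (Real.sin ((n:ℝ)*y) * (24 + 14*Real.cos (2*(m:ℝ)*x) - 6*Real.cos (2*(m:ℝ)*x)^2) + Real.sin (3*(n:ℝ)*y) * (3 - Real.cos (2*(m:ℝ)*x))))^2))
      = π * (((-372)*(m:ℝ)^2*(n:ℝ)^4 + (-255)*(m:ℝ)^4*(n:ℝ)^2) + (1026*(m:ℝ)^2*(n:ℝ)^4 + (-111)*(m:ℝ)^4*(n:ℝ)^2)*Real.cos (2*(n:ℝ)*y) + (896*(m:ℝ)^2*(n:ℝ)^4 + 336*(m:ℝ)^4*(n:ℝ)^2)*Real.cos (2*(n:ℝ)*y)^2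
          + (380*(m:ℝ)^2*(n:ℝ)^4 + 30*(m:ℝ)^4*(n:ℝ)^2)*Real.cos (2*(n:ℝ)*y)^3 + 0*Real.cos (2*(n:ℝ)*y)^4) := by
    intro y _
    rw [intervalIntegral.integral_congr (g := fun x => (81*(Real.cos (3*(n:ℝ)*y))^2*(m:ℝ)^2*(n:ℝ)^4 + 432*(Real.cos ((n:ℝ)*y))*(Real.cos (3*(n:ℝ)*y))*(m:ℝ)^2*(n:ℝ)^4 + 576*(Real.cos ((n:ℝ)*y))^2*(m:ℝ)^2*(n:ℝ)^4 + (-9)*(Real.sin (3*(n:ℝ)*y))^2*(m:ℝ)^2*(n:ℝ)^4 + (-5)*(Real.sin (3*(n:ℝ)*y))^2*(m:ℝ)^4*(n:ℝ)^2 + (-144)*(Real.sin ((n:ℝ)*y))*(Real.sin (3*(n:ℝ)*y))*(m:ℝ)^2*(n:ℝ)^4 + (-256)*(Real.sin ((n:ℝ)*y))*(Real.sin (3*(n:ℝ)*y))*(m:ℝ)^4*(n:ℝ)^2 + (-576)*(Real.sin ((n:ℝ)*y))^2*(m:ℝ)^2*(n:ℝ)^4 + 208*(Real.sin ((n:ℝ)*y))^2*(m:ℝ)^4*(n:ℝ)^2)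 + ((-54)*(Real.cos (3*(n:ℝ)*y))^2*(m:ℝ)^2*(n:ℝ)^4 + 108*(Real.cos ((n:ℝ)*y))*(Real.cos (3*(n:ℝ)*y))*(m:ℝ)^2*(n:ℝ)^4 + 672*(Real.cos ((n:ℝ)*y))^2*(m:ℝ)^2*(n:ℝ)^4 + 6*(Real.sin (3*(n:ℝ)*y))^2*(m:ℝ)^2*(n:ℝ)^4 + 6*(Real.sin (3*(n:ℝ)*y))^2*(m:ℝ)^4*(n:ℝ)^2 + (-36)*(Real.sin ((n:ℝ)*y))*(Real.sin (3*(n:ℝ)*y))*(m:ℝ)^2*(n:ℝ)^4 + 60*(Real.sin ((n:ℝ)*y))*(Real.sin (3*(n:ℝ)*y))*(m:ℝ)^4*(n:ℝ)^2 + (-672)*(Real.sin ((n:ℝ)*y))^2*(m:ℝ)^2*(n:ℝ)^4 + (-2016)*(Real.sin ((n:ℝ)*y))^2*(m:ℝ)^4*(n:ℝ)^2)*Real.cos (2*(m:ℝ)*x)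
        + (9*(Real.cos (3*(n:ℝ)*y))^2*(m:ℝ)^2*(n:ℝ)^4 + (-192)*(Real.cos ((n:ℝ)*y))*(Real.cos (3*(n:ℝ)*y))*(m:ℝ)^2*(n:ℝ)^4 + (-92)*(Real.cos ((n:ℝ)*y))^2*(m:ℝ)^2*(n:ℝ)^4 + (-1)*(Real.sin (3*(n:ℝ)*y))^2*(m:ℝ)^2*(n:ℝ)^4 + (-5)*(Real.sin (3*(n:ℝ)*y))^2*(m:ℝ)^4*(n:ℝ)^2 + 64*(Real.sin ((n:ℝ)*y))*(Real.sin (3*(n:ℝ)*y))*(m:ℝ)^2*(n:ℝ)^4 + 176*(Real.sin ((n:ℝ)*y))*(Real.sin (3*(n:ℝ)*y))*(m:ℝ)^4*(n:ℝ)^2 + 92*(Real.sin ((n:ℝ)*y))^2*(m:ℝ)^2*(n:ℝ)^4 + (-116)*(Real.sin ((n:ℝ)*y))^2*(m:ℝ)^4*(n:ℝ)^2)*Real.cos (2*(m:ℝ)*x)^2 + (36*(Real.cos ((n:ℝ)*y))*(Real.cos (3*(n:ℝ)*y))*(m:ℝ)^2*(n:ℝ)^4 + (-168)*(Real.cos ((n:ℝ)*y))^2*(m:ℝ)^2*(n:ℝ)^4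 + (-12)*(Real.sin ((n:ℝ)*y))*(Real.sin (3*(n:ℝ)*y))*(m:ℝ)^2*(n:ℝ)^4 + (-108)*(Real.sin ((n:ℝ)*y))*(Real.sin (3*(n:ℝ)*y))*(m:ℝ)^4*(n:ℝ)^2 + 168*(Real.sin ((n:ℝ)*y))^2*(m:ℝ)^2*(n:ℝ)^4 + 1512*(Real.sin ((n:ℝ)*y))^2*(m:ℝ)^4*(n:ℝ)^2)*Real.cos (2*(m:ℝ)*x)^3
        + (36*(Real.cos ((n:ℝ)*y))^2*(m:ℝ)^2*(n:ℝ)^4 + (-36)*(Real.sin ((n:ℝ)*y))^2*(m:ℝ)^2*(n:ℝ)^4 + (-612)*(Real.sin ((n:ℝ)*y))^2*(m:ℝ)^4*(n:ℝ)^2)*Real.cos (2*(m:ℝ)*x)^4) (fun x _ => hInt x y)]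
    rw [poly_cos_integral (2*(m:ℝ)) (2*m) (by omega) (by push_cast; ring)]
    have hY3 : Real.sin (3*(n:ℝ)*y) = 3*Real.sin ((n:ℝ)*y) - 4*Real.sin ((n:ℝ)*y)^3 := by
      rw [show (3:ℝ)*(n:ℝ)*y = 3*((n:ℝ)*y) by ring]; exact Real.sin_three_mul _
    have hC3 : Real.cos (3*(n:ℝ)*y) = 4*Real.cos ((n:ℝ)*y)^3 - 3*Real.cos ((n:ℝ)*y) := by
      rw [show (3:ℝ)*(n:ℝ)*y = 3*((n:ℝ)*y) by ring]; exact Real.cos_three_mul _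
    have hv : Real.cos (2*(n:ℝ)*y) = 1 - 2*Real.sin ((n:ℝ)*y)^2 := by
      rw [show (2:ℝ)*(n:ℝ)*y = 2*((n:ℝ)*y) by ring, Real.cos_two_mul]
      linear_combination 2*(Real.sin_sq_add_cos_sq ((n:ℝ)*y))
    have h3 := algA3 (m:ℝ) (n:ℝ) (Real.sin (3*(n:ℝ)*y)) (Real.cos (3*(n:ℝ)*y)) (Real.cos (2*(n:ℝ)*y)) (Real.sin ((n:ℝ)*y)) (Real.cos ((n:ℝ)*y))
      (Real.sin_sq_add_cos_sq _) hY3 hC3 hv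
    linear_combination π * h3
  simp only [MI]
  rw [intervalIntegral.integral_congr (g := fun y => π * (((-372)*(m:ℝ)^2*(n:ℝ)^4 + (-255)*(m:ℝ)^4*(n:ℝ)^2) + (1026*(m:ℝ)^2*(n:ℝ)^4 + (-111)*(m:ℝ)^4*(n:ℝ)^2)*Real.cos (2*(n:ℝ)*y)
      + (896*(m:ℝ)^2*(n:ℝ)^4 + 336*(m:ℝ)^4*(n:ℝ)^2)*Real.cos (2*(n:ℝ)*y)^2 + (380*(m:ℝ)^2*(n:ℝ)^4 + 30*(m:ℝ)^4*(n:ℝ)^2)*Real.cos (2*(n:ℝ)*y)^3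
      + 0*Real.cos (2*(n:ℝ)*y)^4)) houter]
  rw [intervalIntegral.integral_const_mul]
  rw [poly_cos_integral (2*(n:ℝ)) (2*n) (by omega) (by push_cast; ring)]
  have key : π * (2*π*((-372)*(m:ℝ)^2*(n:ℝ)^4 + (-255)*(m:ℝ)^4*(n:ℝ)^2) + π*(896*(m:ℝ)^2*(n:ℝ)^4 + 336*(m:ℝ)^4*(n:ℝ)^2) + 3*π/4*0)
      = π^2 * ((m:ℝ)^2*(n:ℝ)^2*(152*(n:ℝ)^2 - 174*(m:ℝ)^2)) := by ring
  rw [key]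
  have hm1 : (1:ℝ) ≤ (m:ℝ) := by exact_mod_cast hm
  have hn1 : (1:ℝ) ≤ (n:ℝ) := by exact_mod_cast hn0
  have hnm' : (n:ℝ) ≤ (m:ℝ) := by exact_mod_cast hnm
  have hsq : (n:ℝ)^2 ≤ (m:ℝ)^2 := by nlinarith
  apply mul_neg_of_pos_of_neg (by positivity)
  apply mul_neg_of_pos_of_neg (by positivity)
  nlinarith

lemma caseB (m n : ℕ) (hm : 0 < m) (hn0 : 0 < n) (hmn : m ≤ n) :
    MI ((m : ℝ) ^ 2 + (n : ℝ) ^ 2)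
      (pb (fun x y => -(Real.cos ((m:ℝ) * x) * Real.cos ((n:ℝ) * y))) (fun x y => 40*Real.sin ((n:ℝ)*y) - 2*Real.sin (3*(n:ℝ)*y) + 4*Real.cos (2*(m:ℝ)*x)*Real.sin ((n:ℝ)*y))) < 0 := by
  have hψx : ∀ x y : ℝ, pdx (fun x y => -(Real.cos ((m:ℝ) * x) * Real.cos ((n:ℝ) * y))) x y = (m:ℝ)*Real.sin ((m:ℝ)*x)*Real.cos ((n:ℝ)*y) := by
    intro x y
    have h := ((hd_cos (m:ℝ) x).mul_const (Real.cos ((n:ℝ)*y))).neg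
    exact h.deriv.trans (by ring)
  have hψy : ∀ x y : ℝ, pdy (fun x y => -(Real.cos ((m:ℝ) * x) * Real.cos ((n:ℝ) * y))) x y = (n:ℝ)*Real.cos ((m:ℝ)*x)*Real.sin ((n:ℝ)*y) := by
    intro x y
    have h := ((hd_cos (n:ℝ) y).const_mul (Real.cos ((m:ℝ)*x))).neg
    exact h.deriv.trans (by ring)
  have hfx : ∀ x y : ℝ, pdx (fun x y => 40*Real.sin ((n:ℝ)*y) - 2*Real.sin (3*(n:ℝ)*y) + 4*Real.cos (2*(m:ℝ)*x)*Real.sin ((n:ℝ)*y)) x y = -(8*(m:ℝ)*(Real.sin (2*(m:ℝ)*x)*Real.sin ((n:ℝ)*y))) := by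
    intro x y
    have h := ((hasDerivAt_const x (40*Real.sin ((n:ℝ)*y))).sub
      (hasDerivAt_const x (2*Real.sin (3*(n:ℝ)*y)))).add
      (((hd_cos (2*(m:ℝ)) x).const_mul 4).mul_const (Real.sin ((n:ℝ)*y)))
    exact h.deriv.trans (by ring)
  have hfy : ∀ x y : ℝ, pdy (fun x y => 40*Real.sin ((n:ℝ)*y) - 2*Real.sin (3*(n:ℝ)*y) + 4*Real.cos (2*(m:ℝ)*x)*Real.sin ((n:ℝ)*y)) x y
      = 40*(n:ℝ)*Real.cos ((n:ℝ)*y) - 6*(n:ℝ)*Real.cos (3*(n:ℝ)*y) + 4*(n:ℝ)*(Real.cos (2*(m:ℝ)*x)*Real.cos ((n:ℝ)*y)) := by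
    intro x y
    have h := (((hd_sin (n:ℝ) y).const_mul 40).sub ((hd_sin (3*(n:ℝ)) y).const_mul 2)).add
      ((hd_sin (n:ℝ) y).const_mul (4*Real.cos (2*(m:ℝ)*x)))
    exact h.deriv.trans (by ring)
  have hpb : ∀ x y : ℝ, pb (fun x y => -(Real.cos ((m:ℝ) * x) * Real.cos ((n:ℝ) * y))) (fun x y => 40*Real.sin ((n:ℝ)*y) - 2*Real.sin (3*(n:ℝ)*y) + 4*Real.cos (2*(m:ℝ)*x)*Real.sin ((n:ℝ)*y)) x y = (m:ℝ)*(n:ℝ) * (Real.sin ((m:ℝ)*x) * (24 + 14*Real.cos (2*(n:ℝ)*y) - 6*Real.cos (2*(n:ℝ)*y)^2) + Real.sin (3*(m:ℝ)*x) * (3 - Real.cos (2*(n:ℝ)*y))) := by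
    intro x y
    have hc3y : Real.cos (3*(n:ℝ)*y) = 4*Real.cos ((n:ℝ)*y)^3 - 3*Real.cos ((n:ℝ)*y) := by
      rw [show (3:ℝ)*(n:ℝ)*y = 3*((n:ℝ)*y) by ring]; exact Real.cos_three_mul _
    have hz2 : Real.sin (2*(m:ℝ)*x) = 2*Real.sin ((m:ℝ)*x)*Real.cos ((m:ℝ)*x) := by
      rw [show (2:ℝ)*(m:ℝ)*x = 2*((m:ℝ)*x) by ring]; exact Real.sin_two_mul _
    have hw : Real.cos (2*(m:ℝ)*x) = 1 - 2*Real.sin ((m:ℝ)*x)^2 := by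
      rw [show (2:ℝ)*(m:ℝ)*x = 2*((m:ℝ)*x) by ring, Real.cos_two_mul]
      linear_combination 2*(Real.sin_sq_add_cos_sq ((m:ℝ)*x))
    have hv : Real.cos (2*(n:ℝ)*y) = 1 - 2*Real.sin ((n:ℝ)*y)^2 := by
      rw [show (2:ℝ)*(n:ℝ)*y = 2*((n:ℝ)*y) by ring, Real.cos_two_mul]
      linear_combination 2*(Real.sin_sq_add_cos_sq ((n:ℝ)*y))
    have hY3x : Real.sin (3*(m:ℝ)*x) = 3*Real.sin ((m:ℝ)*x) - 4*Real.sin ((m:ℝ)*x)^3 := by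
      rw [show (3:ℝ)*(m:ℝ)*x = 3*((m:ℝ)*x) by ring]; exact Real.sin_three_mul _
    simp only [pb]
    rw [hψx x y, hψy x y, hfx x y, hfy x y]
    exact algB1 (m:ℝ) (n:ℝ) (Real.sin ((m:ℝ)*x)) (Real.cos ((m:ℝ)*x)) (Real.sin ((n:ℝ)*y)) (Real.cos ((n:ℝ)*y)) (Real.cos (3*(n:ℝ)*y)) (Real.sin (2*(m:ℝ)*x)) (Real.cos (2*(m:ℝ)*x)) (Real.cos (2*(n:ℝ)*y)) (Real.sin (3*(m:ℝ)*x))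
      (Real.sin_sq_add_cos_sq _) (Real.sin_sq_add_cos_sq _) hc3y hz2 hw hv hY3x
  rw [show (pb (fun x y => -(Real.cos ((m:ℝ) * x) * Real.cos ((n:ℝ) * y))) (fun x y => 40*Real.sin ((n:ℝ)*y) - 2*Real.sin (3*(n:ℝ)*y) + 4*Real.cos (2*(m:ℝ)*x)*Real.sin ((n:ℝ)*y))) = (fun x y => (m:ℝ)*(n:ℝ) * (Real.sin ((m:ℝ)*x) * (24 + 14*Real.cos (2*(n:ℝ)*y) - 6*Real.cos (2*(n:ℝ)*y)^2) + Real.sin (3*(m:ℝ)*x) * (3 - Real.cos (2*(n:ℝ)*y)))) from funext fun x => funext fun y => hpb x y]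
  have hφx : ∀ x y : ℝ, pdx (fun x y => (m:ℝ)*(n:ℝ) * (Real.sin ((m:ℝ)*x) * (24 + 14*Real.cos (2*(n:ℝ)*y) - 6*Real.cos (2*(n:ℝ)*y)^2) + Real.sin (3*(m:ℝ)*x) * (3 - Real.cos (2*(n:ℝ)*y)))) x y = (m:ℝ)*(n:ℝ) * ((m:ℝ)*Real.cos ((m:ℝ)*x)*(24 + 14*Real.cos (2*(n:ℝ)*y) - 6*Real.cos (2*(n:ℝ)*y)^2) + 3*(m:ℝ)*Real.cos (3*(m:ℝ)*x)*(3 - Real.cos (2*(n:ℝ)*y))) := by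
    intro x y
    have h := (((hd_sin (m:ℝ) x).mul_const (24 + 14*Real.cos (2*(n:ℝ)*y) - 6*Real.cos (2*(n:ℝ)*y)^2)).add
      ((hd_sin (3*(m:ℝ)) x).mul_const (3 - Real.cos (2*(n:ℝ)*y)))).const_mul ((m:ℝ)*(n:ℝ))
    exact h.deriv.trans (by ring)
  have hφy : ∀ x y : ℝ, pdy (fun x y => (m:ℝ)*(n:ℝ) * (Real.sin ((m:ℝ)*x) * (24 + 14*Real.cos (2*(n:ℝ)*y) - 6*Real.cos (2*(n:ℝ)*y)^2) + Real.sin (3*(m:ℝ)*x) * (3 - Real.cos (2*(n:ℝ)*y)))) x y = (m:ℝ)*(n:ℝ) * (Real.sin ((m:ℝ)*x) * (-(28*(n:ℝ)*Real.sin (2*(n:ℝ)*y)) + 24*(n:ℝ)*(Real.cos (2*(n:ℝ)*y)*Real.sin (2*(n:ℝ)*y))) + Real.sin (3*(m:ℝ)*x) * (2*(n:ℝ)*Real.sin (2*(n:ℝ)*y))) := by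
    intro x y
    have hv' := hd_cos (2*(n:ℝ)) y
    have h1 := ((hasDerivAt_const y (24:ℝ)).add (hv'.const_mul 14)).sub ((hv'.pow 2).const_mul 6)
    have h2 := ((hasDerivAt_const y (3:ℝ)).sub hv').const_mul (Real.sin (3*(m:ℝ)*x))
    have h := ((h1.const_mul (Real.sin ((m:ℝ)*x))).add h2).const_mul ((m:ℝ)*(n:ℝ))
    exact h.deriv.trans (by ring)
  have hInt : ∀ x y : ℝ, (pdx (fun x y => (m:ℝ)*(n:ℝ) * (Real.sin ((m:ℝ)*x) * (24 + 14*Real.cos (2*(n:ℝ)*y) - 6*Real.cos (2*(n:ℝ)*y)^2) + Real.sin (3*(m:ℝ)*x) * (3 - Real.cos (2*(n:ℝ)*y)))) x y)^2 + (pdy (fun x y => (m:ℝ)*(n:ℝ) * (Real.sin ((m:ℝ)*x) * (24 + 14*Real.cos (2*(n:ℝ)*y) - 6*Real.cos (2*(n:ℝ)*y)^2) + Real.sin (3*(m:ℝ)*x) * (3 - Real.cos (2*(n:ℝ)*y)))) x y)^2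
      - ((m:ℝ)^2 + (n:ℝ)^2) * ((m:ℝ)*(n:ℝ) * (Real.sin ((m:ℝ)*x) * (24 + 14*Real.cos (2*(n:ℝ)*y) - 6*Real.cos (2*(n:ℝ)*y)^2) + Real.sin (3*(m:ℝ)*x) * (3 - Real.cos (2*(n:ℝ)*y))))^2
      = ((-729/2)*(m:ℝ)^2*(n:ℝ)^4 + (-252)*(m:ℝ)^4*(n:ℝ)^2 + 338*(Real.sin (2*(n:ℝ)*y))^2*(m:ℝ)^2*(n:ℝ)^4 + (-351)*(Real.cos (2*(n:ℝ)*y))*(m:ℝ)^2*(n:ℝ)^4 + (-96)*(Real.cos (2*(n:ℝ)*y))*(m:ℝ)^4*(n:ℝ)^2 + (-624)*(Real.cos (2*(n:ℝ)*y))*(Real.sin (2*(n:ℝ)*y))^2*(m:ℝ)^2*(n:ℝ)^4 + (155/2)*(Real.cos (2*(n:ℝ)*y))^2*(m:ℝ)^2*(n:ℝ)^4 + 132*(Real.cos (2*(n:ℝ)*y))^2*(m:ℝ)^4*(n:ℝ)^2 + 288*(Real.cos (2*(n:ℝ)*y))^2*(Real.sin (2*(n:ℝ)*y))^2*(m:ℝ)^2*(n:ℝ)^4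 + 78*(Real.cos (2*(n:ℝ)*y))^3*(m:ℝ)^2*(n:ℝ)^4 + (-24)*(Real.cos (2*(n:ℝ)*y))^3*(m:ℝ)^4*(n:ℝ)^2 + (-18)*(Real.cos (2*(n:ℝ)*y))^4*(m:ℝ)^2*(n:ℝ)^4) + ((405/2)*(m:ℝ)^2*(n:ℝ)^4 + 585*(m:ℝ)^4*(n:ℝ)^2 + (-442)*(Real.sin (2*(n:ℝ)*y))^2*(m:ℝ)^2*(n:ℝ)^4 + 327*(Real.cos (2*(n:ℝ)*y))*(m:ℝ)^2*(n:ℝ)^4 + 798*(Real.cos (2*(n:ℝ)*y))*(m:ℝ)^4*(n:ℝ)^2 + 720*(Real.cos (2*(n:ℝ)*y))*(Real.sin (2*(n:ℝ)*y))^2*(m:ℝ)^2*(n:ℝ)^4 + (-31/2)*(Real.cos (2*(n:ℝ)*y))^2*(m:ℝ)^2*(n:ℝ)^4 + (-171)*(Real.cos (2*(n:ℝ)*y))^2*(m:ℝ)^4*(n:ℝ)^2 + (-288)*(Real.cos (2*(n:ℝ)*y))^2*(Real.sin (2*(n:ℝ)*y))^2*(m:ℝ)^2*(n:ℝ)^4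 + (-90)*(Real.cos (2*(n:ℝ)*y))^3*(m:ℝ)^2*(n:ℝ)^4 + (-156)*(Real.cos (2*(n:ℝ)*y))^3*(m:ℝ)^4*(n:ℝ)^2 + 18*(Real.cos (2*(n:ℝ)*y))^4*(m:ℝ)^2*(n:ℝ)^4 + 36*(Real.cos (2*(n:ℝ)*y))^4*(m:ℝ)^4*(n:ℝ)^2)*Real.cos (2*(m:ℝ)*x) + (144*(m:ℝ)^2*(n:ℝ)^4 + 576*(m:ℝ)^4*(n:ℝ)^2 + 112*(Real.sin (2*(n:ℝ)*y))^2*(m:ℝ)^2*(n:ℝ)^4 + 36*(Real.cos (2*(n:ℝ)*y))*(m:ℝ)^2*(n:ℝ)^4 + 144*(Real.cos (2*(n:ℝ)*y))*(m:ℝ)^4*(n:ℝ)^2 + (-96)*(Real.cos (2*(n:ℝ)*y))*(Real.sin (2*(n:ℝ)*y))^2*(m:ℝ)^2*(n:ℝ)^4 + (-64)*(Real.cos (2*(n:ℝ)*y))^2*(m:ℝ)^2*(n:ℝ)^4 + (-256)*(Real.cos (2*(n:ℝ)*y))^2*(m:ℝ)^4*(n:ℝ)^2 + 12*(Real.cos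 (2*(n:ℝ)*y))^3*(m:ℝ)^2*(n:ℝ)^4 + 48*(Real.cos (2*(n:ℝ)*y))^3*(m:ℝ)^4*(n:ℝ)^2)*Real.cos (2*(m:ℝ)*x)^2
        + (18*(m:ℝ)^2*(n:ℝ)^4 + 180*(m:ℝ)^4*(n:ℝ)^2 + (-8)*(Real.sin (2*(n:ℝ)*y))^2*(m:ℝ)^2*(n:ℝ)^4 + (-12)*(Real.cos (2*(n:ℝ)*y))*(m:ℝ)^2*(n:ℝ)^4 + (-120)*(Real.cos (2*(n:ℝ)*y))*(m:ℝ)^4*(n:ℝ)^2 + 2*(Real.cos (2*(n:ℝ)*y))^2*(m:ℝ)^2*(n:ℝ)^4 + 20*(Real.cos (2*(n:ℝ)*y))^2*(m:ℝ)^4*(n:ℝ)^2)*Real.cos (2*(m:ℝ)*x)^3 + 0*Real.cos (2*(m:ℝ)*x)^4 := by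
    intro x y
    rw [hφx x y, hφy x y]
    have hc3 : Real.cos (3*(m:ℝ)*x) = 4*Real.cos ((m:ℝ)*x)^3 - 3*Real.cos ((m:ℝ)*x) := by
      rw [show (3:ℝ)*(m:ℝ)*x = 3*((m:ℝ)*x) by ring]; exact Real.cos_three_mul _
    have hY3x : Real.sin (3*(m:ℝ)*x) = 3*Real.sin ((m:ℝ)*x) - 4*Real.sin ((m:ℝ)*x)^3 := by
      rw [show (3:ℝ)*(m:ℝ)*x = 3*((m:ℝ)*x) by ring]; exact Real.sin_three_mul _
    have hw : Real.cos (2*(m:ℝ)*x) = 1 - 2*Real.sin ((m:ℝ)*x)^2 := by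
      rw [show (2:ℝ)*(m:ℝ)*x = 2*((m:ℝ)*x) by ring, Real.cos_two_mul]
      linear_combination 2*(Real.sin_sq_add_cos_sq ((m:ℝ)*x))
    have h := algB2 (m:ℝ) (n:ℝ) (Real.sin ((m:ℝ)*x)) (Real.cos ((m:ℝ)*x)) (Real.cos (3*(m:ℝ)*x)) (Real.sin (3*(m:ℝ)*x)) (Real.cos (2*(n:ℝ)*y)) (Real.sin (2*(n:ℝ)*y)) (Real.cos (2*(m:ℝ)*x))
      ((m:ℝ)^2 + (n:ℝ)^2) (Real.sin_sq_add_cos_sq _) hc3 hY3x hw rfl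
    linear_combination h
  have houter : ∀ y ∈ Set.uIcc (0:ℝ) (2*π),
      (∫ x in (0:ℝ)..(2*π), ((pdx (fun x y => (m:ℝ)*(n:ℝ) * (Real.sin ((m:ℝ)*x) * (24 + 14*Real.cos (2*(n:ℝ)*y) - 6*Real.cos (2*(n:ℝ)*y)^2) + Real.sin (3*(m:ℝ)*x) * (3 - Real.cos (2*(n:ℝ)*y)))) x y)^2 + (pdy (fun x y => (m:ℝ)*(n:ℝ) * (Real.sin ((m:ℝ)*x) * (24 + 14*Real.cos (2*(n:ℝ)*y) - 6*Real.cos (2*(n:ℝ)*y)^2) + Real.sin (3*(m:ℝ)*x) * (3 - Real.cos (2*(n:ℝ)*y)))) x y)^2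
        - ((m:ℝ)^2 + (n:ℝ)^2) * ((m:ℝ)*(n:ℝ) * (Real.sin ((m:ℝ)*x) * (24 + 14*Real.cos (2*(n:ℝ)*y) - 6*Real.cos (2*(n:ℝ)*y)^2) + Real.sin (3*(m:ℝ)*x) * (3 - Real.cos (2*(n:ℝ)*y))))^2))
      = π * ((203*(m:ℝ)^2*(n:ℝ)^4 + 72*(m:ℝ)^4*(n:ℝ)^2) + ((-2010)*(m:ℝ)^2*(n:ℝ)^4 + (-48)*(m:ℝ)^4*(n:ℝ)^2)*Real.cos (2*(n:ℝ)*y) + ((-121)*(m:ℝ)^2*(n:ℝ)^4 + 8*(m:ℝ)^4*(n:ℝ)^2)*Real.cos (2*(n:ℝ)*y)^2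
          + (1512*(m:ℝ)^2*(n:ℝ)^4)*Real.cos (2*(n:ℝ)*y)^3 + ((-612)*(m:ℝ)^2*(n:ℝ)^4)*Real.cos (2*(n:ℝ)*y)^4) := by
    intro y _
    rw [intervalIntegral.integral_congr (g := fun x => ((-729/2)*(m:ℝ)^2*(n:ℝ)^4 + (-252)*(m:ℝ)^4*(n:ℝ)^2 + 338*(Real.sin (2*(n:ℝ)*y))^2*(m:ℝ)^2*(n:ℝ)^4 + (-351)*(Real.cos (2*(n:ℝ)*y))*(m:ℝ)^2*(n:ℝ)^4 + (-96)*(Real.cos (2*(n:ℝ)*y))*(m:ℝ)^4*(n:ℝ)^2 + (-624)*(Real.cos (2*(n:ℝ)*y))*(Real.sin (2*(n:ℝ)*y))^2*(m:ℝ)^2*(n:ℝ)^4 + (155/2)*(Real.cos (2*(n:ℝ)*y))^2*(m:ℝ)^2*(n:ℝ)^4 + 132*(Real.cos (2*(n:ℝ)*y))^2*(m:ℝ)^4*(n:ℝ)^2 + 288*(Real.cos (2*(n:ℝ)*y))^2*(Real.sin (2*(n:ℝ)*y))^2*(m:ℝ)^2*(n:ℝ)^4 + 78*(Real.cos (2*(n:ℝ)*y))^3*(m:ℝ)^2*(n:ℝ)^4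 + (-24)*(Real.cos (2*(n:ℝ)*y))^3*(m:ℝ)^4*(n:ℝ)^2 + (-18)*(Real.cos (2*(n:ℝ)*y))^4*(m:ℝ)^2*(n:ℝ)^4) + ((405/2)*(m:ℝ)^2*(n:ℝ)^4 + 585*(m:ℝ)^4*(n:ℝ)^2 + (-442)*(Real.sin (2*(n:ℝ)*y))^2*(m:ℝ)^2*(n:ℝ)^4 + 327*(Real.cos (2*(n:ℝ)*y))*(m:ℝ)^2*(n:ℝ)^4 + 798*(Real.cos (2*(n:ℝ)*y))*(m:ℝ)^4*(n:ℝ)^2 + 720*(Real.cos (2*(n:ℝ)*y))*(Real.sin (2*(n:ℝ)*y))^2*(m:ℝ)^2*(n:ℝ)^4 + (-31/2)*(Real.cos (2*(n:ℝ)*y))^2*(m:ℝ)^2*(n:ℝ)^4 + (-171)*(Real.cos (2*(n:ℝ)*y))^2*(m:ℝ)^4*(n:ℝ)^2 + (-288)*(Real.cos (2*(n:ℝ)*y))^2*(Real.sin (2*(n:ℝ)*y))^2*(m:ℝ)^2*(n:ℝ)^4 + (-90)*(Real.cos (2*(n:ℝ)*y))^3*(m:ℝ)^2*(n:ℝ)^4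 + (-156)*(Real.cos (2*(n:ℝ)*y))^3*(m:ℝ)^4*(n:ℝ)^2 + 18*(Real.cos (2*(n:ℝ)*y))^4*(m:ℝ)^2*(n:ℝ)^4 + 36*(Real.cos (2*(n:ℝ)*y))^4*(m:ℝ)^4*(n:ℝ)^2)*Real.cos (2*(m:ℝ)*x)
        + (144*(m:ℝ)^2*(n:ℝ)^4 + 576*(m:ℝ)^4*(n:ℝ)^2 + 112*(Real.sin (2*(n:ℝ)*y))^2*(m:ℝ)^2*(n:ℝ)^4 + 36*(Real.cos (2*(n:ℝ)*y))*(m:ℝ)^2*(n:ℝ)^4 + 144*(Real.cos (2*(n:ℝ)*y))*(m:ℝ)^4*(n:ℝ)^2 + (-96)*(Real.cos (2*(n:ℝ)*y))*(Real.sin (2*(n:ℝ)*y))^2*(m:ℝ)^2*(n:ℝ)^4 + (-64)*(Real.cos (2*(n:ℝ)*y))^2*(m:ℝ)^2*(n:ℝ)^4 + (-256)*(Real.cos (2*(n:ℝ)*y))^2*(m:ℝ)^4*(n:ℝ)^2 + 12*(Real.cos (2*(n:ℝ)*y))^3*(m:ℝ)^2*(n:ℝ)^4 + 48*(Real.cos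 (2*(n:ℝ)*y))^3*(m:ℝ)^4*(n:ℝ)^2)*Real.cos (2*(m:ℝ)*x)^2 + (18*(m:ℝ)^2*(n:ℝ)^4 + 180*(m:ℝ)^4*(n:ℝ)^2 + (-8)*(Real.sin (2*(n:ℝ)*y))^2*(m:ℝ)^2*(n:ℝ)^4 + (-12)*(Real.cos (2*(n:ℝ)*y))*(m:ℝ)^2*(n:ℝ)^4 + (-120)*(Real.cos (2*(n:ℝ)*y))*(m:ℝ)^4*(n:ℝ)^2 + 2*(Real.cos (2*(n:ℝ)*y))^2*(m:ℝ)^2*(n:ℝ)^4 + 20*(Real.cos (2*(n:ℝ)*y))^2*(m:ℝ)^4*(n:ℝ)^2)*Real.cos (2*(m:ℝ)*x)^3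
        + 0*Real.cos (2*(m:ℝ)*x)^4) (fun x _ => hInt x y)]
    rw [poly_cos_integral (2*(m:ℝ)) (2*m) (by omega) (by push_cast; ring)]
    have h3 := algB3 (m:ℝ) (n:ℝ) (Real.cos (2*(n:ℝ)*y)) (Real.sin (2*(n:ℝ)*y)) (Real.sin_sq_add_cos_sq _)
    linear_combination π * h3
  simp only [MI]
  rw [intervalIntegral.integral_congr (g := fun y => π * ((203*(m:ℝ)^2*(n:ℝ)^4 + 72*(m:ℝ)^4*(n:ℝ)^2) + ((-2010)*(m:ℝ)^2*(n:ℝ)^4 + (-48)*(m:ℝ)^4*(n:ℝ)^2)*Real.cos (2*(n:ℝ)*y)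
      + ((-121)*(m:ℝ)^2*(n:ℝ)^4 + 8*(m:ℝ)^4*(n:ℝ)^2)*Real.cos (2*(n:ℝ)*y)^2 + (1512*(m:ℝ)^2*(n:ℝ)^4)*Real.cos (2*(n:ℝ)*y)^3
      + ((-612)*(m:ℝ)^2*(n:ℝ)^4)*Real.cos (2*(n:ℝ)*y)^4)) houter]
  rw [intervalIntegral.integral_const_mul]
  rw [poly_cos_integral (2*(n:ℝ)) (2*n) (by omega) (by push_cast; ring)]
  have key : π * (2*π*(203*(m:ℝ)^2*(n:ℝ)^4 + 72*(m:ℝ)^4*(n:ℝ)^2) + π*((-121)*(m:ℝ)^2*(n:ℝ)^4 + 8*(m:ℝ)^4*(n:ℝ)^2) + 3*π/4*((-612)*(m:ℝ)^2*(n:ℝ)^4))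
      = π^2 * ((m:ℝ)^2*(n:ℝ)^2*(152*(m:ℝ)^2 - 174*(n:ℝ)^2)) := by ring
  rw [key]
  have hm1 : (1:ℝ) ≤ (m:ℝ) := by exact_mod_cast hm
  have hn1 : (1:ℝ) ≤ (n:ℝ) := by exact_mod_cast hn0
  have hmn' : (m:ℝ) ≤ (n:ℝ) := by exact_mod_cast hmn
  have hsq : (m:ℝ)^2 ≤ (n:ℝ)^2 := by nlinarith
  apply mul_neg_of_pos_of_neg (by positivity)
  apply mul_neg_of_pos_of_neg (by positivity)
  nlinarith

/-- For every pair of positive integers `(m, n)` there is a smooth function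
`f : ℝ² → ℝ`, `2π`-periodic in each variable, such that `φ = {ψ, f}` with
`ψ(x,y) = -cos(mx)cos(ny)` has negative Misiołek index. -/
theorem misiolek_criterion_all_kolmogorov (m n : ℕ) (hm : 0 < m) (hn : 0 < n) :
    ∃ f : ℝ → ℝ → ℝ,
      ContDiff ℝ (⊤ : ℕ∞) (fun p : ℝ × ℝ => f p.1 p.2) ∧
      (∀ x y, f (x + 2 * π) y = f x y) ∧
      (∀ x y, f x (y + 2 * π) = f x y) ∧
      MI ((m : ℝ) ^ 2 + (n : ℝ) ^ 2)
        (pb (fun x y => -(Real.cos (m * x) * Real.cos (n * y))) f) < 0 := by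
  have s1 : ContDiff ℝ (⊤ : ℕ∞) (fun p : ℝ × ℝ => Real.sin ((m:ℝ)*p.1)) :=
    Real.contDiff_sin.comp (contDiff_const.mul contDiff_fst)
  have s2 : ContDiff ℝ (⊤ : ℕ∞) (fun p : ℝ × ℝ => Real.sin (3*(m:ℝ)*p.1)) :=
    Real.contDiff_sin.comp (contDiff_const.mul contDiff_fst)
  have s3 : ContDiff ℝ (⊤ : ℕ∞) (fun p : ℝ × ℝ => Real.sin ((n:ℝ)*p.2)) :=
    Real.contDiff_sin.comp (contDiff_const.mul contDiff_snd)
  have s4 : ContDiff ℝ (⊤ : ℕ∞) (fun p : ℝ × ℝ => Real.sin (3*(n:ℝ)*p.2)) :=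
    Real.contDiff_sin.comp (contDiff_const.mul contDiff_snd)
  have c1 : ContDiff ℝ (⊤ : ℕ∞) (fun p : ℝ × ℝ => Real.cos (2*(n:ℝ)*p.2)) :=
    Real.contDiff_cos.comp (contDiff_const.mul contDiff_snd)
  have c2 : ContDiff ℝ (⊤ : ℕ∞) (fun p : ℝ × ℝ => Real.cos (2*(m:ℝ)*p.1)) :=
    Real.contDiff_cos.comp (contDiff_const.mul contDiff_fst)
  rcases le_total n m with hcase | hcase
  · refine ⟨fun x y => 40*Real.sin ((m:ℝ)*x) - 2*Real.sin (3*(m:ℝ)*x) + 4*Real.sin ((m:ℝ)*x)*Real.cos (2*(n:ℝ)*y), ?_, ?_, ?_, caseA m n hm hn hcase⟩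
    · exact ((contDiff_const.mul s1).sub (contDiff_const.mul s2)).add
        ((contDiff_const.mul s1).mul c1)
    · intro x y
      simp only []
      rw [show (m:ℝ)*(x + 2*π) = (m:ℝ)*x + (m:ℕ)*(2*π) by ring,
          show (3:ℝ)*(m:ℝ)*(x + 2*π) = 3*(m:ℝ)*x + ((3*m:ℕ):ℝ)*(2*π) by push_cast; ring,
          Real.sin_add_nat_mul_two_pi, Real.sin_add_nat_mul_two_pi]
    · intro x y
      simp only []
      rw [show (2:ℝ)*(n:ℝ)*(y + 2*π) = 2*(n:ℝ)*y + ((2*n:ℕ):ℝ)*(2*π) by push_cast; ring,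
          Real.cos_add_nat_mul_two_pi]
  · refine ⟨fun x y => 40*Real.sin ((n:ℝ)*y) - 2*Real.sin (3*(n:ℝ)*y) + 4*Real.cos (2*(m:ℝ)*x)*Real.sin ((n:ℝ)*y), ?_, ?_, ?_, caseB m n hm hn hcase⟩
    · exact ((contDiff_const.mul s3).sub (contDiff_const.mul s4)).add
        ((contDiff_const.mul c2).mul s3)
    · intro x y
      simp only []
      rw [show (2:ℝ)*(m:ℝ)*(x + 2*π) = 2*(m:ℝ)*x + ((2*m:ℕ):ℝ)*(2*π) by push_cast; ring,
          Real.cos_add_nat_mul_two_pi]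
    · intro x y
      simp only []
      rw [show (n:ℝ)*(y + 2*π) = (n:ℝ)*y + (n:ℕ)*(2*π) by ring,
          show (3:ℝ)*(n:ℝ)*(y + 2*π) = 3*(n:ℝ)*y + ((3*n:ℕ):ℝ)*(2*π) by push_cast; ring,
          Real.sin_add_nat_mul_two_pi, Real.sin_add_nat_mul_two_pi]
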